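/- Let A ∈ M_n(ℂ), let λ ∈ ℂ and v ∈ ℂ^n with ‖v‖ = 1 and Av = λv, and suppose the operator S₀ = π_{v⊥} ∘ (λI − A)|_{v⊥} : v⊥ → v⊥ is invertible, where π_{v⊥} is the orthogonal projection of ℂ^n onto the orthogonal complement v⊥ of v. Consider the linear map DG₁ : M_n(ℂ) → v⊥ given by DG₁(Ȧ) = S₀^{-1}(π_{v⊥}(Ȧ v)), where M_n(ℂ) carries the Frobenius Hermitian inner product. Then the operator norm of DG₁ equals ‖S₀^{-1}‖, the operator norm of S₀^{-1}. -/

import Mathlib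

/-!
`DG₁` factors as `Ȧ ↦ Ȧ v`, followed by `π_{v⊥}` and `S₀⁻¹`. Precomposing `S₀⁻¹` with the
contraction `π_{v⊥}`, which fixes `v⊥`, does not change its norm. For a unit vector `v` one has
`‖Ȧ v‖ ≤ ‖Ȧ‖_F`, and every unit vector `w` is hit by the rank-one matrix `w v*` of Frobenius
norm one; so the norm of `DG₁` is that of `S₀⁻¹`, attained because the unit sphere of a
finite-dimensional space is compact.
-/

open Matrix
open scoped Matrix.Norms.Frobenius

theorem ContinuousLinearMap.exists_norm_eq_one_norm_apply_eq_opNorm {𝕜 E F : Type*} [RCLike 𝕜]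
    [NormedAddCommGroup E] [NormedSpace 𝕜 E] [ProperSpace E] [Nontrivial E]
    [NormedAddCommGroup F] [NormedSpace 𝕜 F] (f : E →L[𝕜] F) :
    ∃ x, ‖x‖ = 1 ∧ ‖f x‖ = ‖f‖ := by
  let _ := NormedSpace.restrictScalars ℝ 𝕜 E
  obtain ⟨x, hx, hfx⟩ :=
    ((isCompact_sphere (0 : E) 1).image (continuous_norm.comp f.continuous)).sSup_mem
      ((NormedSpace.sphere_nonempty.2 zero_le_one).image _)
  exact ⟨x, mem_sphere_zero_iff_norm.1 hx, hfx.trans f.sSup_sphere_eq_norm⟩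

theorem Submodule.opNorm_comp_orthogonalProjectionOnto {𝕜 E F : Type*} [RCLike 𝕜]
    [NormedAddCommGroup E] [InnerProductSpace 𝕜 E] [NormedAddCommGroup F] [NormedSpace 𝕜 F]
    (K : Submodule 𝕜 E) [K.HasOrthogonalProjection] (T : K →L[𝕜] F) :
    ‖T.comp K.orthogonalProjectionOnto‖ = ‖T‖ := by
  refine le_antisymm ((T.opNorm_comp_le _).trans
    (mul_le_of_le_one_right (norm_nonneg _) K.orthogonalProjectionOnto_norm_le)) ?_
  refine T.opNorm_le_bound (norm_nonneg _) fun x => ?_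
  simpa using (T.comp K.orthogonalProjectionOnto).le_opNorm x

namespace Matrix

variable {𝕜 m n : Type*} [RCLike 𝕜]

theorem toEuclideanLin_vecMulVec_apply [Fintype n] [DecidableEq n] (w : EuclideanSpace 𝕜 m)
    (x : EuclideanSpace 𝕜 n) :
    toEuclideanLin (vecMulVec w.ofLp (star x.ofLp)) x = (‖x‖ : 𝕜) ^ 2 • w := by
  rw [toLpLin_apply, vecMulVec_mulVec, ← inner_self_eq_norm_sq_to_K,
    EuclideanSpace.inner_eq_star_dotProduct, dotProduct_comm]
  ext i
  simp [mul_comm]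

variable [Fintype m] [Fintype n]

theorem frobenius_norm_eq_sqrt (A : Matrix m n 𝕜) : ‖A‖ = √(∑ i, ∑ j, ‖A i j‖ ^ 2) := by
  rw [frobenius_norm_def, Real.sqrt_eq_rpow]
  simp only [Real.rpow_two]

theorem frobenius_norm_vecMulVec (w : EuclideanSpace 𝕜 m) (x : EuclideanSpace 𝕜 n) :
    ‖vecMulVec w.ofLp (star x.ofLp)‖ = ‖w‖ * ‖x‖ := by
  rw [frobenius_norm_eq_sqrt, EuclideanSpace.norm_eq, EuclideanSpace.norm_eq,
    ← Real.sqrt_mul (by positivity), Finset.sum_mul_sum]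
  simp [vecMulVec_apply, norm_mul, mul_pow]

variable [DecidableEq n]

theorem frobenius_norm_toEuclideanLin_apply_le (A : Matrix m n 𝕜) (x : EuclideanSpace 𝕜 n) :
    ‖toEuclideanLin A x‖ ≤ ‖A‖ * ‖x‖ := by
  simpa [toLpLin_apply, ← replicateCol_mulVec] using frobenius_norm_mul A (replicateCol Unit x.ofLp)

theorem isGreatest_norm_apply_toEuclideanLin [Nonempty m] {F : Type*} [NormedAddCommGroup F]
    [NormedSpace 𝕜 F] (T : EuclideanSpace 𝕜 m →L[𝕜] F) {v : EuclideanSpace 𝕜 n} (hv : ‖v‖ = 1) :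
    IsGreatest {c | ∃ A : Matrix m n 𝕜, ‖A‖ = 1 ∧ c = ‖T (toEuclideanLin A v)‖} ‖T‖ := by
  obtain ⟨w, hw, hTw⟩ := T.exists_norm_eq_one_norm_apply_eq_opNorm
  refine ⟨⟨vecMulVec w.ofLp (star v.ofLp), ?_, ?_⟩, ?_⟩
  · rw [frobenius_norm_vecMulVec, hw, hv, one_mul]
  · rw [toEuclideanLin_vecMulVec_apply, hv]
    simp [hTw]
  · rintro _ ⟨A, hA, rfl⟩
    calc ‖T (toEuclideanLin A v)‖ ≤ ‖T‖ * ‖toEuclideanLin A v‖ := T.le_opNorm _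
      _ ≤ ‖T‖ * (‖A‖ * ‖v‖) := by gcongr; exact frobenius_norm_toEuclideanLin_apply_le A v
      _ = ‖T‖ := by rw [hA, hv, one_mul, mul_one]

end Matrix

theorem stmt_13_general (n : ℕ) (hn : 1 ≤ n) (v : EuclideanSpace ℂ (Fin n)) (hv : ‖v‖ = 1)
    (S : (ℂ ∙ v)ᗮ ≃ₗ[ℂ] (ℂ ∙ v)ᗮ) :
    IsGreatest
      {c : ℝ | ∃ dA : Matrix (Fin n) (Fin n) ℂ,
        Real.sqrt (∑ i, ∑ j, ‖dA i j‖ ^ 2) = 1 ∧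
        c = ‖S.symm (Submodule.orthogonalProjectionOnto (ℂ ∙ v)ᗮ (Matrix.toEuclideanLin dA v))‖}
      ‖LinearMap.toContinuousLinearMap (S.symm : (ℂ ∙ v)ᗮ →ₗ[ℂ] (ℂ ∙ v)ᗮ)‖ := by
  have : Nonempty (Fin n) := ⟨⟨0, hn⟩⟩
  have h := isGreatest_norm_apply_toEuclideanLin
    ((LinearMap.toContinuousLinearMap (S.symm : (ℂ ∙ v)ᗮ →ₗ[ℂ] (ℂ ∙ v)ᗮ)).comp
      (ℂ ∙ v)ᗮ.orthogonalProjectionOnto) hv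
  rw [Submodule.opNorm_comp_orthogonalProjectionOnto] at h
  simp only [frobenius_norm_eq_sqrt] at h
  exact h

/-- **The eigenvector condition number.**
Let `A ∈ M_n(ℂ)`, `λ ∈ ℂ`, `v ∈ ℂ^n` a unit eigenvector (`Av = λv`), and suppose
`S₀ = π_{v⊥} ∘ (λI - A)|_{v⊥} : v⊥ → v⊥` is invertible (given here as a linear
equivalence `S` of `v⊥` with `S w = π_{v⊥}(λ w - A w)`).  The operator norm of
the condition matrix `DG₁(Ȧ) = S₀⁻¹(π_{v⊥}(Ȧ v))` on `M_n(ℂ)` with the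
Frobenius Hermitian inner product — i.e. the greatest value of `‖DG₁(Ȧ)‖` over
matrices `Ȧ` of Frobenius norm 1 — equals `‖S₀⁻¹‖`, the operator norm of
`S₀⁻¹`. -/
theorem stmt_13 (n : ℕ) (hn : 1 ≤ n) (A : Matrix (Fin n) (Fin n) ℂ)
    (lam : ℂ) (v : EuclideanSpace ℂ (Fin n)) (hv : ‖v‖ = 1)
    (hAv : Matrix.toEuclideanLin A v = lam • v)
    (S : (ℂ ∙ v)ᗮ ≃ₗ[ℂ] (ℂ ∙ v)ᗮ)
    (hS : ∀ w : (ℂ ∙ v)ᗮ,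
      S w = Submodule.orthogonalProjectionOnto (ℂ ∙ v)ᗮ (lam • (w : EuclideanSpace ℂ (Fin n)) -
        Matrix.toEuclideanLin A w)) :
    IsGreatest
      {c : ℝ | ∃ dA : Matrix (Fin n) (Fin n) ℂ,
        Real.sqrt (∑ i, ∑ j, ‖dA i j‖ ^ 2) = 1 ∧
        c = ‖S.symm (Submodule.orthogonalProjectionOnto (ℂ ∙ v)ᗮ (Matrix.toEuclideanLin dA v))‖}
      ‖LinearMap.toContinuousLinearMap (S.symm : (ℂ ∙ v)ᗮ →ₗ[ℂ] (ℂ ∙ v)ᗮ)‖ :=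
  stmt_13_general n hn v hv S
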